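/- Let n ≥ 1, let G be a directed graph on node set V = {1,…,n} with in-neighbor sets D_l ⊆ V satisfying l ∉ D_l for every l (no self-loops), let ρ_{kl} ∈ [0,1] for all k,l, let α ∈ [0,1], let a ∈ {0,1}^n, and let P ∈ [0,1]^n. For each state x^j ∈ {0,1}^n and node l, define η^j_l = (1 + a_l·(α−1)) · ( x^j_l + (1−x^j_l)·(1 − ∏_{r∈D_l}(1 − ρ_{rl}·x^j_r)) ), and define the matrix M by M_{ij} = ∏_{l=1}^n (η^j_l·x^i_l + (1−η^j_l)·(1−x^i_l)). Then for every node r ∈ {1,…,n}: Σ_{x^i∈{0,1}^n} x^i_r · Σ_{x^j∈{0,1}^n} M_{ij}·Π*(P)_{x^j} = (1 + a_r·(α−1)) · ( P_r + (1−P_r)·(1 − ∏_{k∈D_r}(1 − ρ_{kr}·P_k)) ). -/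

import Mathlib

open Finset

/-- Interpret a Boolean state coordinate as a real number (1 = compromised, 0 = secure). -/
def bToR (v : Bool) : ℝ := if v then 1 else 0

/-- The product distribution `Π*(P)` on `{0,1}^n` induced by the marginal vector `P`:
`Π*(P)_x = ∏_l (P_l·x_l + (1−P_l)·(1−x_l))`. -/
noncomputable def piStar {n : ℕ} (P : Fin n → ℝ) (x : Fin n → Bool) : ℝ :=
  ∏ l, (P l * bToR (x l) + (1 - P l) * (1 - bToR (x l)))

/-!
Under the product distribution `Π*(P)` the coordinates are independent Bernoulli variables, so
the expectation of a product of affine functions of distinct coordinates is the product of those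
functions evaluated at the means. Summing `x_r` against the `j`-th column of `M`, itself a
product distribution, returns `η^j_r`; and since `r ∉ D_r`, the function `x ↦ η_r(x)` is
such a product of affine functions (up to constants), so its expectation under `Π*(P)`
is `η_r(P)`.
-/

theorem sum_prod_mul_piStar {n : ℕ} (g : Fin n → Bool → ℝ) (P : Fin n → ℝ) :
    ∑ x : Fin n → Bool, (∏ l, g l (x l)) * piStar P x =
      ∏ l, ∑ b, g l b * (P l * bToR b + (1 - P l) * (1 - bToR b)) := by
  simp_rw [piStar, ← prod_mul_distrib, Fintype.prod_sum]

theorem sum_prod_affine_mul_piStar {n : ℕ} (s : Finset (Fin n)) (u v P : Fin n → ℝ) :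
    ∑ x : Fin n → Bool, (∏ k ∈ s, (u k - v k * bToR (x k))) * piStar P x =
      ∏ k ∈ s, (u k - v k * P k) := by
  simp_rw [← Fintype.prod_ite_mem s]
  rw [sum_prod_mul_piStar (fun k b => if k ∈ s then u k - v k * bToR b else 1)]
  refine prod_congr rfl fun k _ => ?_
  split_ifs
  · simp [bToR]
    ring
  · simp [bToR]

theorem sum_piStar {n : ℕ} (P : Fin n → ℝ) : ∑ x : Fin n → Bool, piStar P x = 1 := by
  simpa using sum_prod_affine_mul_piStar ∅ 0 0 P

theorem sum_bToR_mul_piStar {n : ℕ} (P : Fin n → ℝ) (r : Fin n) :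
    ∑ x : Fin n → Bool, bToR (x r) * piStar P x = P r := by
  simpa using sum_prod_affine_mul_piStar {r} 0 (-1) P

theorem prod_insert_one_sub_update_mul {ι R : Type*} [DecidableEq ι] [CommRing R]
    {s : Finset ι} {r : ι} (hr : r ∉ s) (w t : ι → R) :
    ∏ k ∈ insert r s, (1 - Function.update w r 1 k * t k) =
      (1 - t r) * ∏ k ∈ s, (1 - w k * t k) := by
  rw [prod_insert hr, Function.update_self, one_mul]
  congr 1
  refine prod_congr rfl fun k hk => ?_
  rw [Function.update_of_ne (ne_of_mem_of_not_mem hk hr)]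

theorem XMPiStar_eq_MFA_general {n : ℕ}
    (D : Fin n → Finset (Fin n)) (hD : ∀ l, l ∉ D l)
    (ρ : Fin n → Fin n → ℝ)
    (α : ℝ) (a : Fin n → Bool)
    (P : Fin n → ℝ)
    (η : (Fin n → Bool) → Fin n → ℝ)
    (hη : ∀ (xj : Fin n → Bool) (l : Fin n),
      η xj l = (1 + bToR (a l) * (α - 1)) *
        (bToR (xj l) +
          (1 - bToR (xj l)) * (1 - ∏ r ∈ D l, (1 - ρ r l * bToR (xj r)))))
    (M : (Fin n → Bool) → (Fin n → Bool) → ℝ)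
    (hM : ∀ xi xj : Fin n → Bool,
      M xi xj = ∏ l, (η xj l * bToR (xi l) + (1 - η xj l) * (1 - bToR (xi l))))
    (r : Fin n) :
    ∑ xi : Fin n → Bool, bToR (xi r) * ∑ xj : Fin n → Bool, M xi xj * piStar P xj =
      (1 + bToR (a r) * (α - 1)) *
        (P r + (1 - P r) * (1 - ∏ k ∈ D r, (1 - ρ k r * P k))) := by
  classical
  set c := 1 + bToR (a r) * (α - 1)
  have column_marginal (xj : Fin n → Bool) : ∑ xi, bToR (xi r) * M xi xj = η xj r := by
    simp_rw [hM]
    exact sum_bToR_mul_piStar (η xj) r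
  have η_affine (xj : Fin n → Bool) : η xj r =
      c - c * ∏ k ∈ insert r (D r), (1 - Function.update (ρ · r) r 1 k * bToR (xj k)) := by
    simp_rw [prod_insert_one_sub_update_mul (hD r), hη]
    ring
  calc ∑ xi, bToR (xi r) * ∑ xj, M xi xj * piStar P xj
      = ∑ xj, η xj r * piStar P xj := by
        simp_rw [mul_sum, ← column_marginal, sum_mul, mul_assoc]
        exact sum_comm
    _ = c * ∑ xj, piStar P xj - c * ∑ xj,
          (∏ k ∈ insert r (D r), (1 - Function.update (ρ · r) r 1 k * bToR (xj k))) *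
            piStar P xj := by
        simp_rw [η_affine, sub_mul, sum_sub_distrib, mul_sum, mul_assoc]
    _ = c * (P r + (1 - P r) * (1 - ∏ k ∈ D r, (1 - ρ k r * P k))) := by
        rw [sum_piStar, sum_prod_affine_mul_piStar]
        simp_rw [prod_insert_one_sub_update_mul (hD r)]
        ring

/-- Theorem 2, `X M Π*(P)` step of the BKF equals the MFA update:
with `η^j_l` the next-step compromise probability of node `l` from state `x^j` under
cleaning `a` (cleaning failure probability `α`, attack success probabilities `ρ_{kl}`,
in-neighbor sets `D_l` with no self-loops) and `M` the induced `2^n`-state transition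
matrix, the `r`-th marginal of `M·Π*(P)` is given by the mean-field expression. -/
theorem XMPiStar_eq_MFA {n : ℕ} (hn : 1 ≤ n)
    (D : Fin n → Finset (Fin n)) (hD : ∀ l, l ∉ D l)
    (ρ : Fin n → Fin n → ℝ) (hρ : ∀ k l, ρ k l ∈ Set.Icc (0 : ℝ) 1)
    (α : ℝ) (hα : α ∈ Set.Icc (0 : ℝ) 1) (a : Fin n → Bool)
    (P : Fin n → ℝ) (hP : ∀ l, P l ∈ Set.Icc (0 : ℝ) 1)
    (η : (Fin n → Bool) → Fin n → ℝ)
    (hη : ∀ (xj : Fin n → Bool) (l : Fin n),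
      η xj l = (1 + bToR (a l) * (α - 1)) *
        (bToR (xj l) +
          (1 - bToR (xj l)) * (1 - ∏ r ∈ D l, (1 - ρ r l * bToR (xj r)))))
    (M : (Fin n → Bool) → (Fin n → Bool) → ℝ)
    (hM : ∀ xi xj : Fin n → Bool,
      M xi xj = ∏ l, (η xj l * bToR (xi l) + (1 - η xj l) * (1 - bToR (xi l))))
    (r : Fin n) :
    ∑ xi : Fin n → Bool, bToR (xi r) * ∑ xj : Fin n → Bool, M xi xj * piStar P xj =
      (1 + bToR (a r) * (α - 1)) *
        (P r + (1 - P r) * (1 - ∏ k ∈ D r, (1 - ρ k r * P k))) :=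
  XMPiStar_eq_MFA_general D hD ρ α a P η hη M hM r
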